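/- arXiv:2010.08096 — 4 statements merged into one kernel-verified Lean document; each statement's English description precedes it below -/
import Mathlib

section
/- Assume c > 1 and d > 1. Let (u₁,u₂) ∈ ℤ² satisfy −c < u₁ ≤ a, −d < u₂ ≤ b, and (c−1)·u₂ < (d−1)·(u₁−a). Then: (i) if (u₁−a, u₂) ∉ B, then −c < u₁−a ≤ a, −d < u₂ ≤ b, and (c−1)·u₂ < (d−1)·(u₁−2a); and (ii) if (u₁−a, u₂+b) ∉ B, then −c < u₁−a ≤ a, −d < u₂+b ≤ b, and (c−1)·(u₂+b) < (d−1)·(u₁−2a). -/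
/-- The set `B` of exponent vectors from (1.1) of the paper. -/
def memB (a b c d : ℕ) (v : ℤ × ℤ) : Prop :=
  if 1 < c ∧ 1 < d then
    -(c : ℤ) < v.1 ∧ v.1 ≤ (a : ℤ) ∧ -(d : ℤ) < v.2 ∧ v.2 ≤ (b : ℤ) ∧
      ((d : ℤ) - 1) * (v.1 - (a : ℤ)) ≤ ((c : ℤ) - 1) * v.2 ∧
      ((c : ℤ) - 1) * v.2 < ((d : ℤ) - 1) * v.1 + ((c : ℤ) - 1) * (b : ℤ)
  else if c = 1 ∧ 1 < d then
    0 ≤ v.1 ∧ v.1 ≤ (a : ℤ) ∧ -(d : ℤ) < v.2 ∧ v.2 ≤ (b : ℤ) ∧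
      ¬ (v.1 = (a : ℤ) ∧ 1 - (d : ℤ) ≤ v.2 ∧ v.2 ≤ 0)
  else if 1 < c ∧ d = 1 then
    -(c : ℤ) < v.1 ∧ v.1 ≤ (a : ℤ) ∧ 0 ≤ v.2 ∧ v.2 ≤ (b : ℤ) ∧
      ¬ (v.2 = (b : ℤ) ∧ 1 - (c : ℤ) ≤ v.1 ∧ v.1 ≤ 0)
  else
    0 ≤ v.1 ∧ v.1 ≤ (a : ℤ) ∧ 0 ≤ v.2 ∧ v.2 ≤ (b : ℤ) ∧ v ≠ ((0 : ℤ), (b : ℤ))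

theorem stmt2 (a b c d : ℕ) (ha : 0 < a) (hb : 0 < b) (hc : 1 < c) (hd : 1 < d)
    (u : ℤ × ℤ) (hu1 : -(c : ℤ) < u.1) (hu1' : u.1 ≤ (a : ℤ))
    (hu2 : -(d : ℤ) < u.2) (hu2' : u.2 ≤ (b : ℤ))
    (hlt : ((c : ℤ) - 1) * u.2 < ((d : ℤ) - 1) * (u.1 - (a : ℤ))) :
    (¬ memB a b c d (u.1 - (a : ℤ), u.2) →
      -(c : ℤ) < u.1 - (a : ℤ) ∧ u.1 - (a : ℤ) ≤ (a : ℤ) ∧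
      -(d : ℤ) < u.2 ∧ u.2 ≤ (b : ℤ) ∧
      ((c : ℤ) - 1) * u.2 < ((d : ℤ) - 1) * (u.1 - 2 * (a : ℤ))) ∧
    (¬ memB a b c d (u.1 - (a : ℤ), u.2 + (b : ℤ)) →
      -(c : ℤ) < u.1 - (a : ℤ) ∧ u.1 - (a : ℤ) ≤ (a : ℤ) ∧
      -(d : ℤ) < u.2 + (b : ℤ) ∧ u.2 + (b : ℤ) ≤ (b : ℤ) ∧
      ((c : ℤ) - 1) * (u.2 + (b : ℤ)) < ((d : ℤ) - 1) * (u.1 - 2 * (a : ℤ))) := by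
  have hc' : (1:ℤ) < c := by exact_mod_cast hc
  have hd' : (1:ℤ) < d := by exact_mod_cast hd
  have ha' : (0:ℤ) < a := by exact_mod_cast ha
  have hb' : (0:ℤ) < b := by exact_mod_cast hb
  have key1 : -(c:ℤ) < u.1 - a := by nlinarith
  have hu2neg : u.2 < 0 := by nlinarith
  simp only [memB, if_pos (⟨hc, hd⟩ : 1 < c ∧ 1 < d)] at *
  constructor
  · intro h
    push_neg at h
    refine ⟨key1, by linarith, hu2, hu2', ?_⟩
    by_contra hcon
    push_neg at hcon
    have := h key1 (by linarith) hu2 hu2' (by linarith)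
    nlinarith
  · intro h
    push_neg at h
    refine ⟨key1, by linarith, by linarith, by linarith, ?_⟩
    by_contra hcon
    push_neg at hcon
    have := h key1 (by linarith) (by linarith) (by linarith) (by linarith)
    nlinarith
end

section
/- Let (v₁,v₂) ∈ ℤ² satisfy −c < v₁ ≤ a and −d < v₂ ≤ b. Then the monomial x₁^{v₁}x₂^{v₂} lies in the F-subspace span_F{ x₁^{w₁}x₂^{w₂} : (w₁,w₂) ∈ B } + D₁(R) + D₂(R) of R. -/
/-- The Laurent polynomial ring `F[x₁^{±1}, x₂^{±1}]` as the monoid algebra of `ℤ²` over `F`. -/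
noncomputable abbrev LaurentR (F : Type*) [Field F] := AddMonoidAlgebra F (ℤ × ℤ)

/-- The operator `D₁(h) = x₁ ∂h/∂x₁ + (a·x₁^a − c·λ·x₁^{−c}x₂^{−d})·h`. -/
noncomputable def D1 {F : Type*} [Field F] (a c d : ℕ) (lam : F)
    (h : LaurentR F) : LaurentR F :=
  Finsupp.sum h.coeff (fun v r => AddMonoidAlgebra.single v ((v.1 : F) * r)) +
    (AddMonoidAlgebra.single ((a : ℤ), (0 : ℤ)) (a : F)
      - AddMonoidAlgebra.single (-(c : ℤ), -(d : ℤ)) ((c : F) * lam)) * h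

/-- The operator `D₂(h) = x₂ ∂h/∂x₂ + (b·x₂^b − d·λ·x₁^{−c}x₂^{−d})·h`. -/
noncomputable def D2 {F : Type*} [Field F] (b c d : ℕ) (lam : F)
    (h : LaurentR F) : LaurentR F :=
  Finsupp.sum h.coeff (fun v r => AddMonoidAlgebra.single v ((v.2 : F) * r)) +
    (AddMonoidAlgebra.single ((0 : ℤ), (b : ℤ)) (b : F)
      - AddMonoidAlgebra.single (-(c : ℤ), -(d : ℤ)) ((d : F) * lam)) * h


/-!
On a monomial the `λ`-terms of `D1` and `D2` differ only by the factor `c : d`, so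
`d • D1 x^u - c • D2 x^u = (d u₁ - c u₂) x^u + d a x^(u + (a, 0)) - c b x^(u + (0, b))`
is free of `λ`. As `c b` and `d a` are units of `F`, modulo the images of `D1` and `D2` a
monomial `x^v` is a combination of `x^(v - (0, b))` and `x^(v + (a, -b))`, and also of
`x^(v - (a, 0))` and `x^(v + (-a, b))`. These two moves bring every monomial of the box
`(-c, a] × (-d, b]` down to `B`: for `c, d > 1`, `B` is the part of the box where
`s = (c - 1) v₂ - (d - 1) v₁` lies in `[-(d - 1) a, (c - 1) b)`, the first move strictly lowers
`s` above this strip without leaving the box or falling below the strip, and the second one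
symmetrically raises `s` below it. In the degenerate cases `c = 1` or `d = 1` a single move
reaches `B`.
-/

def InBox (a b c d : ℕ) (v : ℤ × ℤ) : Prop :=
  -(c : ℤ) < v.1 ∧ v.1 ≤ a ∧ -(d : ℤ) < v.2 ∧ v.2 ≤ b

def stripCoord (c d : ℕ) (v : ℤ × ℤ) : ℤ := (c - 1) * v.2 - (d - 1) * v.1

section BoxInduction

variable {a b c d : ℕ} {v : ℤ × ℤ}

lemma memB_c_one_d_one_iff : memB a b 1 1 v ↔ InBox a b 1 1 v ∧ v ≠ (0, (b : ℤ)) := by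
  simp only [memB, InBox, lt_irrefl, false_and, and_false, if_false, Nat.cast_one, ne_eq,
    Prod.ext_iff]
  omega

lemma memB_c_one_iff (hd : 1 < d) :
    memB a b 1 d v ↔ InBox a b 1 d v ∧ ¬(v.1 = a ∧ 1 - (d : ℤ) ≤ v.2 ∧ v.2 ≤ 0) := by
  simp only [memB, InBox, lt_irrefl, false_and, if_false, true_and, hd, if_true, Nat.cast_one]
  omega

lemma memB_d_one_iff (hc : 1 < c) :
    memB a b c 1 v ↔ InBox a b c 1 v ∧ ¬(v.2 = b ∧ 1 - (c : ℤ) ≤ v.1 ∧ v.1 ≤ 0) := by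
  simp only [memB, InBox, lt_irrefl, and_false, if_false, and_true, hc, if_true, Nat.cast_one]
  omega

lemma memB_iff_stripCoord (hc : 1 < c) (hd : 1 < d) :
    memB a b c d v ↔ InBox a b c d v ∧
      -((d - 1) * a : ℤ) ≤ stripCoord c d v ∧ stripCoord c d v < (c - 1) * b := by
  rw [memB, if_pos ⟨hc, hd⟩, InBox, stripCoord]
  constructor
  · rintro ⟨h1, h2, h3, h4, h5, h6⟩
    exact ⟨⟨h1, h2, h3, h4⟩, by linarith, by linarith⟩
  · rintro ⟨⟨h1, h2, h3, h4⟩, h5, h6⟩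
    exact ⟨h1, h2, h3, h4, by linarith, by linarith⟩

variable {P : ℤ × ℤ → Prop}

lemma inBox_induction_c_one_d_one (hb : 0 < b) (hB : ∀ w, memB a b 1 1 w → P w)
    (hup : ∀ w : ℤ × ℤ, P (w - (0, (b : ℤ))) → P (w + ((a : ℤ), -(b : ℤ))) → P w)
    (hv : InBox a b 1 1 v) : P v := by
  by_cases hv0 : v = (0, (b : ℤ))
  · subst hv0
    apply hup <;> refine hB _ (memB_c_one_d_one_iff.mpr ?_) <;>
      simp only [InBox, ne_eq, Prod.ext_iff, Prod.fst_add, Prod.snd_add, Prod.fst_sub,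
        Prod.snd_sub] <;> omega
  · exact hB v (memB_c_one_d_one_iff.mpr ⟨hv, hv0⟩)

lemma inBox_induction_c_one (ha : 0 < a) (hd : 1 < d) (hB : ∀ w, memB a b 1 d w → P w)
    (hdown : ∀ w : ℤ × ℤ, P (w - ((a : ℤ), 0)) → P (w + (-(a : ℤ), (b : ℤ))) → P w)
    (hv : InBox a b 1 d v) : P v := by
  by_cases hv0 : v.1 = a ∧ 1 - (d : ℤ) ≤ v.2 ∧ v.2 ≤ 0
  · obtain ⟨-, -, -, hv2⟩ := hv
    apply hdown <;> refine hB _ ((memB_c_one_iff hd).mpr ?_) <;>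
      simp only [InBox, Prod.fst_add, Prod.snd_add, Prod.fst_sub, Prod.snd_sub] <;> omega
  · exact hB v ((memB_c_one_iff hd).mpr ⟨hv, hv0⟩)

lemma inBox_induction_d_one (hb : 0 < b) (hc : 1 < c) (hB : ∀ w, memB a b c 1 w → P w)
    (hup : ∀ w : ℤ × ℤ, P (w - (0, (b : ℤ))) → P (w + ((a : ℤ), -(b : ℤ))) → P w)
    (hv : InBox a b c 1 v) : P v := by
  by_cases hv0 : v.2 = b ∧ 1 - (c : ℤ) ≤ v.1 ∧ v.1 ≤ 0
  · obtain ⟨-, hv1, -, -⟩ := hv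
    apply hup <;> refine hB _ ((memB_d_one_iff hc).mpr ?_) <;>
      simp only [InBox, Prod.fst_add, Prod.snd_add, Prod.fst_sub, Prod.snd_sub] <;> omega
  · exact hB v ((memB_d_one_iff hc).mpr ⟨hv, hv0⟩)

lemma inBox_induction_of_le_stripCoord {v : ℤ × ℤ} (hb : 0 < b) (hc : 1 < c) (hd : 1 < d)
    (hB : ∀ w, memB a b c d w → P w)
    (hup : ∀ w : ℤ × ℤ, P (w - (0, (b : ℤ))) → P (w + ((a : ℤ), -(b : ℤ))) → P w)
    (hv : InBox a b c d v) (hlow : -((d - 1) * a : ℤ) ≤ stripCoord c d v) : P v := by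
  by_cases hhigh : stripCoord c d v < (c - 1) * b
  · exact hB v ((memB_iff_stripCoord hc hd).mpr ⟨hv, hlow, hhigh⟩)
  push Not at hhigh
  have hcb : 0 < ((c : ℤ) - 1) * b := mul_pos (by omega) (by omega)
  have hda : 0 ≤ ((d : ℤ) - 1) * a := mul_nonneg (by omega) (by omega)
  obtain ⟨h1, h2, h3, h4⟩ := hv
  have hv1 : v.1 ≤ 0 := by unfold stripCoord at hhigh; nlinarith
  have hv2 : 1 - (d : ℤ) ≤ v.2 - b := by unfold stripCoord at hhigh; nlinarith
  have e1 : stripCoord c d (v - (0, (b : ℤ))) = stripCoord c d v - (c - 1) * b := by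
    simp only [stripCoord, Prod.fst_sub, Prod.snd_sub]; ring
  have e2 : stripCoord c d (v + ((a : ℤ), -(b : ℤ))) =
      stripCoord c d v - (c - 1) * b - (d - 1) * a := by
    simp only [stripCoord, Prod.fst_add, Prod.snd_add]; ring
  apply hup
  · exact inBox_induction_of_le_stripCoord hb hc hd hB hup
      (by simp only [InBox, Prod.fst_sub, Prod.snd_sub]; omega) (by omega)
  · exact inBox_induction_of_le_stripCoord hb hc hd hB hup
      (by simp only [InBox, Prod.fst_add, Prod.snd_add]; omega) (by omega)
termination_by (stripCoord c d v).toNat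
decreasing_by all_goals omega

lemma inBox_induction_of_one_lt {v : ℤ × ℤ} (ha : 0 < a) (hb : 0 < b) (hc : 1 < c) (hd : 1 < d)
    (hB : ∀ w, memB a b c d w → P w)
    (hup : ∀ w : ℤ × ℤ, P (w - (0, (b : ℤ))) → P (w + ((a : ℤ), -(b : ℤ))) → P w)
    (hdown : ∀ w : ℤ × ℤ, P (w - ((a : ℤ), 0)) → P (w + (-(a : ℤ), (b : ℤ))) → P w)
    (hv : InBox a b c d v) : P v := by
  by_cases hlow : -((d - 1) * a : ℤ) ≤ stripCoord c d v
  · exact inBox_induction_of_le_stripCoord hb hc hd hB hup hv hlow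
  push Not at hlow
  have hda : 0 < ((d : ℤ) - 1) * a := mul_pos (by omega) (by omega)
  have hcb : 0 ≤ ((c : ℤ) - 1) * b := mul_nonneg (by omega) (by omega)
  obtain ⟨h1, h2, h3, h4⟩ := hv
  have hv1 : 1 - (c : ℤ) ≤ v.1 - a := by unfold stripCoord at hlow; nlinarith
  have hv2 : v.2 ≤ 0 := by unfold stripCoord at hlow; nlinarith
  have e1 : stripCoord c d (v - ((a : ℤ), 0)) = stripCoord c d v + (d - 1) * a := by
    simp only [stripCoord, Prod.fst_sub, Prod.snd_sub]; ring
  have e2 : stripCoord c d (v + (-(a : ℤ), (b : ℤ))) =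
      stripCoord c d v + (d - 1) * a + (c - 1) * b := by
    simp only [stripCoord, Prod.fst_add, Prod.snd_add]; ring
  apply hdown
  · exact inBox_induction_of_one_lt ha hb hc hd hB hup hdown
      (by simp only [InBox, Prod.fst_sub, Prod.snd_sub]; omega)
  · exact inBox_induction_of_one_lt ha hb hc hd hB hup hdown
      (by simp only [InBox, Prod.fst_add, Prod.snd_add]; omega)
termination_by (-stripCoord c d v).toNat
decreasing_by all_goals omega

theorem inBox_induction (ha : 0 < a) (hb : 0 < b) (hc : 0 < c) (hd : 0 < d)
    (hB : ∀ w, memB a b c d w → P w)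
    (hup : ∀ w : ℤ × ℤ, P (w - (0, (b : ℤ))) → P (w + ((a : ℤ), -(b : ℤ))) → P w)
    (hdown : ∀ w : ℤ × ℤ, P (w - ((a : ℤ), 0)) → P (w + (-(a : ℤ), (b : ℤ))) → P w)
    (hv : InBox a b c d v) : P v := by
  obtain rfl | hc := (by omega : c = 1 ∨ 1 < c) <;>
    obtain rfl | hd := (by omega : d = 1 ∨ 1 < d)
  · exact inBox_induction_c_one_d_one hb hB hup hv
  · exact inBox_induction_c_one ha hd hB hdown hv
  · exact inBox_induction_d_one hb hc hB hup hv
  · exact inBox_induction_of_one_lt ha hb hc hd hB hup hdown hv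

end BoxInduction

open AddMonoidAlgebra

section SingleMem

variable {F G : Type*} [Field F] {N : Submodule F (AddMonoidAlgebra F G)} {u : G} {r : F}

lemma single_mem_of_single_one_mem (h : single u 1 ∈ N) : single u r ∈ N := by
  simpa only [smul_single', mul_one] using N.smul_mem r h

lemma single_mem_iff_single_one_mem (hr : r ≠ 0) : single u r ∈ N ↔ single u 1 ∈ N := by
  simpa only [smul_single', mul_one] using N.smul_mem_iff hr (x := single u 1)

end SingleMem

section DiagAddMul

variable {F G : Type*} [Field F] [AddMonoid G]

noncomputable def diagAddMul (φ : G → F) (m : AddMonoidAlgebra F G) :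
    AddMonoidAlgebra F G →ₗ[F] AddMonoidAlgebra F G where
  toFun h := h.coeff.sum (fun v r => single v (φ v * r)) + m * h
  map_add' h g := by
    rw [coeff_add, Finsupp.sum_add_index' (fun _ => by simp)
      (fun _ _ _ => by rw [mul_add, single_add]), mul_add]
    abel
  map_smul' k h := by
    rw [coeff_smul, Finsupp.sum_smul_index' (fun _ => by simp), RingHom.id_apply, smul_add,
      Finsupp.smul_sum, mul_smul_comm]
    simp only [smul_eq_mul, smul_single', mul_left_comm]

lemma diagAddMul_single (φ : G → F) (m : AddMonoidAlgebra F G) (u : G) :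
    diagAddMul φ m (single u 1) = single u (φ u) + m * single u 1 := by
  simp [diagAddMul]

end DiagAddMul

section Reduction

variable {F : Type*} [Field F] {a b c d : ℕ} {lam : F}

noncomputable def D1ₗ (a c d : ℕ) (lam : F) : LaurentR F →ₗ[F] LaurentR F :=
  diagAddMul (fun v => (v.1 : F))
    (single ((a : ℤ), (0 : ℤ)) (a : F) - single (-(c : ℤ), -(d : ℤ)) ((c : F) * lam))

noncomputable def D2ₗ (b c d : ℕ) (lam : F) : LaurentR F →ₗ[F] LaurentR F :=
  diagAddMul (fun v => (v.2 : F))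
    (single ((0 : ℤ), (b : ℤ)) (b : F) - single (-(c : ℤ), -(d : ℤ)) ((d : F) * lam))

lemma D1ₗ_apply (h : LaurentR F) : D1ₗ a c d lam h = D1 a c d lam h := rfl

lemma D2ₗ_apply (h : LaurentR F) : D2ₗ b c d lam h = D2 b c d lam h := rfl

variable (a b c d lam) in
lemma smul_D1_sub_smul_D2_single (u : ℤ × ℤ) :
    (d : F) • D1 a c d lam (single u 1) - (c : F) • D2 b c d lam (single u 1) =
      single u ((d : F) * u.1 - c * u.2) + single (((a : ℤ), (0 : ℤ)) + u) ((d : F) * a)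
        - single (((0 : ℤ), (b : ℤ)) + u) ((c : F) * b) := by
  rw [← D1ₗ_apply, ← D2ₗ_apply, D1ₗ, D2ₗ, diagAddMul_single, diagAddMul_single]
  simp only [sub_mul, single_mul_single, mul_one, smul_add, smul_sub, smul_single', single_sub]
  rw [mul_left_comm (d : F)]
  abel

variable (a b c d lam) in
noncomputable def spanBD : Submodule F (LaurentR F) :=
  Submodule.span F {x : LaurentR F | ∃ w : ℤ × ℤ, memB a b c d w ∧ x = single w (1 : F)}
    ⊔ LinearMap.range (D1ₗ a c d lam) ⊔ LinearMap.range (D2ₗ b c d lam)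

lemma mem_spanBD_iff {f : LaurentR F} :
    f ∈ spanBD a b c d lam ↔ ∃ g ∈ Submodule.span F
        {x : LaurentR F | ∃ w : ℤ × ℤ, memB a b c d w ∧ x = single w (1 : F)},
      ∃ h₁ h₂ : LaurentR F, f = g + D1 a c d lam h₁ + D2 b c d lam h₂ := by
  simp only [spanBD, Submodule.mem_sup, LinearMap.mem_range, D1ₗ_apply, D2ₗ_apply]
  constructor
  · rintro ⟨_, ⟨g, hg, _, ⟨h₁, rfl⟩, rfl⟩, _, ⟨h₂, rfl⟩, rfl⟩
    exact ⟨g, hg, h₁, h₂, rfl⟩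
  · rintro ⟨g, hg, h₁, h₂, rfl⟩
    exact ⟨_, ⟨g, hg, _, ⟨h₁, rfl⟩, rfl⟩, _, ⟨h₂, rfl⟩, rfl⟩

lemma single_mem_spanBD_of_memB {w : ℤ × ℤ} (hw : memB a b c d w) :
    single w 1 ∈ spanBD a b c d lam :=
  Submodule.mem_sup_left (Submodule.mem_sup_left (Submodule.subset_span ⟨w, hw, rfl⟩))

lemma smul_D1_sub_smul_D2_mem_spanBD (h : LaurentR F) :
    (d : F) • D1 a c d lam h - (c : F) • D2 b c d lam h ∈ spanBD a b c d lam :=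
  sub_mem (Submodule.smul_mem _ _ (Submodule.mem_sup_left (Submodule.mem_sup_right ⟨h, rfl⟩)))
    (Submodule.smul_mem _ _ (Submodule.mem_sup_right ⟨h, rfl⟩))

lemma single_mem_spanBD_of_sub_b (hcb : (c : F) * b ≠ 0) (v : ℤ × ℤ)
    (h₁ : single (v - ((0 : ℤ), (b : ℤ))) 1 ∈ spanBD a b c d lam)
    (h₂ : single (v + ((a : ℤ), -(b : ℤ))) 1 ∈ spanBD a b c d lam) :
    single v 1 ∈ spanBD a b c d lam := by
  set u := v - ((0 : ℤ), (b : ℤ))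
  have hv : ((0 : ℤ), (b : ℤ)) + u = v := add_sub_cancel _ _
  have hu : ((a : ℤ), (0 : ℤ)) + u = v + ((a : ℤ), -(b : ℤ)) := by
    ext <;> simp only [u, Prod.fst_add, Prod.snd_add, Prod.fst_sub, Prod.snd_sub] <;> ring
  have key := smul_D1_sub_smul_D2_single a b c d lam u
  rw [hv, hu] at key
  have hrel : single v ((c : F) * b) = single u ((d : F) * u.1 - c * u.2)
      + single (v + ((a : ℤ), -(b : ℤ))) ((d : F) * a)
      - ((d : F) • D1 a c d lam (single u 1) - (c : F) • D2 b c d lam (single u 1)) := by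
    rw [key]; abel
  rw [← single_mem_iff_single_one_mem hcb, hrel]
  exact sub_mem (add_mem (single_mem_of_single_one_mem h₁) (single_mem_of_single_one_mem h₂))
    (smul_D1_sub_smul_D2_mem_spanBD _)

lemma single_mem_spanBD_of_sub_a (hda : (d : F) * a ≠ 0) (v : ℤ × ℤ)
    (h₁ : single (v - ((a : ℤ), (0 : ℤ))) 1 ∈ spanBD a b c d lam)
    (h₂ : single (v + (-(a : ℤ), (b : ℤ))) 1 ∈ spanBD a b c d lam) :
    single v 1 ∈ spanBD a b c d lam := by
  set u := v - ((a : ℤ), (0 : ℤ))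
  have hv : ((a : ℤ), (0 : ℤ)) + u = v := add_sub_cancel _ _
  have hu : ((0 : ℤ), (b : ℤ)) + u = v + (-(a : ℤ), (b : ℤ)) := by
    ext <;> simp only [u, Prod.fst_add, Prod.snd_add, Prod.fst_sub, Prod.snd_sub] <;> ring
  have key := smul_D1_sub_smul_D2_single a b c d lam u
  rw [hv, hu] at key
  have hrel : single v ((d : F) * a) =
      ((d : F) • D1 a c d lam (single u 1) - (c : F) • D2 b c d lam (single u 1))
      - single u ((d : F) * u.1 - c * u.2)
      + single (v + (-(a : ℤ), (b : ℤ))) ((c : F) * b) := by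
    rw [key]; abel
  rw [← single_mem_iff_single_one_mem hda, hrel]
  exact add_mem (sub_mem (smul_D1_sub_smul_D2_mem_spanBD _) (single_mem_of_single_one_mem h₁))
    (single_mem_of_single_one_mem h₂)

end Reduction

theorem stmt3_general {F : Type*} [Field F] (p a b c d : ℕ)
    (ha : 0 < a) (hb : 0 < b) (hc : 0 < c) (hd : 0 < d)
    [CharP F p] (hpdvd : ¬ p ∣ a * b * c * d)
    (lam : F) (v : ℤ × ℤ)
    (hv1 : -(c : ℤ) < v.1) (hv1' : v.1 ≤ (a : ℤ))
    (hv2 : -(d : ℤ) < v.2) (hv2' : v.2 ≤ (b : ℤ)) :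
    ∃ g ∈ Submodule.span F
        {x : LaurentR F | ∃ w : ℤ × ℤ, memB a b c d w ∧ x = AddMonoidAlgebra.single w (1 : F)},
      ∃ h₁ h₂ : LaurentR F,
        AddMonoidAlgebra.single v (1 : F) = g + D1 a c d lam h₁ + D2 b c d lam h₂ := by
  have habcd : ((a * b * c * d : ℕ) : F) ≠ 0 := fun h =>
    hpdvd ((CharP.cast_eq_zero_iff F p _).mp h)
  simp only [Nat.cast_mul, mul_ne_zero_iff] at habcd
  obtain ⟨⟨⟨haF, hbF⟩, hcF⟩, hdF⟩ := habcd
  exact mem_spanBD_iff.mp (inBox_induction ha hb hc hd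
    (P := fun w => single w 1 ∈ spanBD a b c d lam) (fun w hw => single_mem_spanBD_of_memB hw)
    (single_mem_spanBD_of_sub_b (mul_ne_zero hcF hbF))
    (single_mem_spanBD_of_sub_a (mul_ne_zero hdF haF)) ⟨hv1, hv1', hv2, hv2'⟩)

theorem stmt3 {F : Type*} [Field F] (p a b c d : ℕ)
    (ha : 0 < a) (hb : 0 < b) (hc : 0 < c) (hd : 0 < d)
    (hab : Nat.gcd a b = 1) (hac : Nat.gcd a c = 1)
    (hbc : Nat.gcd b c = 1) (hbd : Nat.gcd b d = 1)
    (hp : 0 < p) [CharP F p] (hpdvd : ¬ p ∣ a * b * c * d)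
    (lam : F) (hlam : lam ≠ 0) (v : ℤ × ℤ)
    (hv1 : -(c : ℤ) < v.1) (hv1' : v.1 ≤ (a : ℤ))
    (hv2 : -(d : ℤ) < v.2) (hv2' : v.2 ≤ (b : ℤ)) :
    ∃ g ∈ Submodule.span F
        {x : LaurentR F | ∃ w : ℤ × ℤ, memB a b c d w ∧ x = AddMonoidAlgebra.single w (1 : F)},
      ∃ h₁ h₂ : LaurentR F,
        AddMonoidAlgebra.single v (1 : F) = g + D1 a c d lam h₁ + D2 b c d lam h₂ :=
  stmt3_general p a b c d ha hb hc hd hpdvd lam v hv1 hv1' hv2 hv2'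
end

section
/- The set B is finite and its cardinality equals ab + ad + bc (which is 2!·Vol(Δ∞(f̄,μ)), the rank of the top-dimensional cohomology in the paper). -/
open Finset in
/-- The complement of the strip condition inside the box `(-(k+1), A] × (-(l+1), B]`
bijects with the rectangle `[0,k] × [0,l]`. -/
private lemma strip_complement_card (A B k l : ℤ) (hA : 1 ≤ A) (hB : 1 ≤ B)
    (hk : 1 ≤ k) (hl : 1 ≤ l) :
    ((Finset.Ioc (-(k+1)) A ×ˢ Finset.Ioc (-(l+1)) B).filter
      (fun v => ¬(l*(v.1-A) ≤ k*v.2 ∧ k*v.2 < l*v.1 + k*B))).card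
    = (Finset.Icc (0:ℤ) k ×ˢ Finset.Icc (0:ℤ) l).card := by
  apply Finset.card_bij'
    (i := fun v _ => if k*B ≤ k*v.2 - l*v.1 then (-v.1, B - v.2) else (A - v.1, -v.2))
    (j := fun w _ => if k*w.2 ≤ l*w.1 then (-w.1, B - w.2) else (A - w.1, -w.2))
  · rintro ⟨n, y⟩ hv
    simp only [Finset.mem_filter, Finset.mem_product, Finset.mem_Ioc] at hv
    obtain ⟨⟨⟨hn1, hn2⟩, hy1, hy2⟩, hns⟩ := hv
    rw [not_and_or, not_le, not_lt] at hns
    by_cases hcase : k*B ≤ k*y - l*n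
    · simp only [if_pos hcase, Finset.mem_product, Finset.mem_Icc]
      have hln : l*n ≤ 0 := by nlinarith
      have hn0 : n ≤ 0 := by
        by_contra h
        push_neg at h
        nlinarith
      refine ⟨⟨by linarith, by linarith⟩, by linarith, ?_⟩
      by_contra h
      push_neg at h
      nlinarith [mul_nonneg (by linarith : (0:ℤ) ≤ k) (by linarith : (0:ℤ) ≤ B - y - l - 1),
        mul_nonneg (by linarith : (0:ℤ) ≤ l) (by linarith : (0:ℤ) ≤ k + n)]
    · simp only [if_neg hcase, Finset.mem_product, Finset.mem_Icc]
      push_neg at hcase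
      have hbelow : k*y < l*(n - A) := by
        rcases hns with h | h
        · exact h
        · exfalso; linarith
      have hyneg : y ≤ 0 := by
        by_contra h
        push_neg at h
        nlinarith [mul_nonneg (by linarith : (0:ℤ) ≤ l) (by linarith : (0:ℤ) ≤ A - n)]
      refine ⟨⟨by linarith, ?_⟩, by linarith, by linarith⟩
      by_contra h
      push_neg at h
      nlinarith [mul_nonneg (by linarith : (0:ℤ) ≤ k) (by linarith : (0:ℤ) ≤ y + l),
        mul_nonneg (by linarith : (0:ℤ) ≤ l) (by linarith : (0:ℤ) ≤ A - n - k - 1)]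
  · rintro ⟨u, t⟩ hw
    simp only [Finset.mem_product, Finset.mem_Icc] at hw
    obtain ⟨⟨hu1, hu2⟩, ht1, ht2⟩ := hw
    by_cases hcase : k*t ≤ l*u
    · simp only [if_pos hcase, Finset.mem_filter, Finset.mem_product, Finset.mem_Ioc]
      refine ⟨⟨⟨by linarith, by linarith⟩, by linarith, by linarith⟩, ?_⟩
      rw [not_and_or, not_le, not_lt]
      right
      nlinarith
    · simp only [if_neg hcase, Finset.mem_filter, Finset.mem_product, Finset.mem_Ioc]
      push_neg at hcase
      have htpos : 1 ≤ t := by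
        by_contra h
        push_neg at h
        nlinarith [mul_nonneg (by linarith : (0:ℤ) ≤ l) (by linarith : (0:ℤ) ≤ u)]
      refine ⟨⟨⟨by linarith, by linarith⟩, by linarith, by linarith⟩, ?_⟩
      rw [not_and_or, not_lt, not_le]
      left
      nlinarith
  · rintro ⟨n, y⟩ hv
    simp only [Finset.mem_filter, Finset.mem_product, Finset.mem_Ioc] at hv
    obtain ⟨⟨⟨hn1, hn2⟩, hy1, hy2⟩, hns⟩ := hv
    rw [not_and_or, not_le, not_lt] at hns
    by_cases hcase : k*B ≤ k*y - l*n
    · simp only [if_pos hcase]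
      have hcond : k*(B - y) ≤ l*(-n) := by nlinarith
      simp only [if_pos hcond]
      simp
    · simp only [if_neg hcase]
      push_neg at hcase
      have hbelow : k*y < l*(n - A) := by
        rcases hns with h | h
        · exact h
        · exfalso; linarith
      have hcond : ¬ (k*(-y) ≤ l*(A - n)) := by
        push_neg
        nlinarith
      simp only [if_neg hcond]
      simp
  · rintro ⟨u, t⟩ hw
    simp only [Finset.mem_product, Finset.mem_Icc] at hw
    obtain ⟨⟨hu1, hu2⟩, ht1, ht2⟩ := hw
    by_cases hcase : k*t ≤ l*u
    · simp only [if_pos hcase]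
      have hcond : k*B ≤ k*(B - t) - l*(-u) := by nlinarith
      simp only [if_pos hcond]
      simp
    · simp only [if_neg hcase]
      push_neg at hcase
      have hcond : ¬ (k*B ≤ k*(-t) - l*(A - u)) := by
        push_neg
        nlinarith [mul_nonneg (by linarith : (0:ℤ) ≤ l) (by linarith : (0:ℤ) ≤ A - 1),
          mul_nonneg (by linarith : (0:ℤ) ≤ k) (by linarith : (0:ℤ) ≤ B)]
      simp only [if_neg hcond]
      simp

theorem stmt6 (a b c d : ℕ) (ha : 0 < a) (hb : 0 < b) (hc : 0 < c) (hd : 0 < d)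
    (hab : Nat.gcd a b = 1) (hac : Nat.gcd a c = 1)
    (hbc : Nat.gcd b c = 1) (hbd : Nat.gcd b d = 1) :
    {v : ℤ × ℤ | memB a b c d v}.Finite ∧
    {v : ℤ × ℤ | memB a b c d v}.ncard = a * b + a * d + b * c := by
  classical
  have hc' : c = 1 ∨ 1 < c := by omega
  have hd' : d = 1 ∨ 1 < d := by omega
  rcases hc' with hc1 | hc2 <;> rcases hd' with hd1 | hd2
  · -- c = 1, d = 1
    subst hc1; subst hd1
    set F : Finset (ℤ × ℤ) :=
      ((Finset.Icc (0:ℤ) (a:ℤ)) ×ˢ (Finset.Icc (0:ℤ) (b:ℤ))).erase ((0:ℤ), (b:ℤ)) with hF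
    have hset : {v : ℤ × ℤ | memB a b 1 1 v} = (F : Set (ℤ × ℤ)) := by
      ext ⟨x, y⟩
      show memB a b 1 1 (x, y) ↔ _
      unfold memB
      rw [if_neg (by omega), if_neg (by omega), if_neg (by omega)]
      simp only [hF, Finset.coe_erase, Set.mem_diff, Finset.coe_product, Set.mem_prod,
        Finset.mem_coe, Finset.mem_Icc, Set.mem_singleton_iff, Prod.mk.injEq, ne_eq,
        Prod.ext_iff, not_and]
      omega
    rw [hset]
    refine ⟨F.finite_toSet, ?_⟩
    rw [Set.ncard_coe_finset, hF]
    rw [Finset.card_erase_of_mem (by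
      simp only [Finset.mem_product, Finset.mem_Icc]
      omega)]
    rw [Finset.card_product, Int.card_Icc, Int.card_Icc]
    have h1 : ((a:ℤ) + 1 - 0).toNat = a + 1 := by omega
    have h2 : ((b:ℤ) + 1 - 0).toNat = b + 1 := by omega
    rw [h1, h2]
    exact Nat.sub_eq_of_eq_add (by ring)
  · -- c = 1, 1 < d
    subst hc1
    set F : Finset (ℤ × ℤ) :=
      ((Finset.Icc (0:ℤ) (a:ℤ)) ×ˢ (Finset.Ioc (-(d:ℤ)) (b:ℤ))) \
        ({(a:ℤ)} ×ˢ (Finset.Icc (1-(d:ℤ)) 0)) with hF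
    have hset : {v : ℤ × ℤ | memB a b 1 d v} = (F : Set (ℤ × ℤ)) := by
      ext ⟨x, y⟩
      show memB a b 1 d (x, y) ↔ _
      unfold memB
      rw [if_neg (by omega), if_pos (by omega)]
      simp only [hF, Finset.coe_sdiff, Set.mem_diff, Finset.coe_product, Set.mem_prod,
        Finset.mem_coe, Finset.mem_Icc, Finset.mem_Ioc, Finset.coe_singleton,
        Set.mem_singleton_iff, Nat.cast_one, not_and]
      omega
    rw [hset]
    refine ⟨F.finite_toSet, ?_⟩
    rw [Set.ncard_coe_finset, hF]
    rw [Finset.card_sdiff_of_subset (by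
      rintro ⟨x, y⟩ h
      simp only [Finset.mem_product, Finset.mem_singleton, Finset.mem_Icc] at h
      simp only [Finset.mem_product, Finset.mem_Icc, Finset.mem_Ioc]
      omega)]
    rw [Finset.card_product, Finset.card_product, Finset.card_singleton,
      Int.card_Icc, Int.card_Icc, Int.card_Ioc]
    have h1 : ((a:ℤ) + 1 - 0).toNat = a + 1 := by omega
    have h2 : ((b:ℤ) - -(d:ℤ)).toNat = b + d := by omega
    have h3 : ((0:ℤ) + 1 - (1 - (d:ℤ))).toNat = d := by omega
    rw [h1, h2, h3]
    exact Nat.sub_eq_of_eq_add (by ring)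
  · -- 1 < c, d = 1
    subst hd1
    set F : Finset (ℤ × ℤ) :=
      ((Finset.Ioc (-(c:ℤ)) (a:ℤ)) ×ˢ (Finset.Icc (0:ℤ) (b:ℤ))) \
        ((Finset.Icc (1-(c:ℤ)) 0) ×ˢ {(b:ℤ)}) with hF
    have hset : {v : ℤ × ℤ | memB a b c 1 v} = (F : Set (ℤ × ℤ)) := by
      ext ⟨x, y⟩
      show memB a b c 1 (x, y) ↔ _
      unfold memB
      rw [if_neg (by omega), if_neg (by omega), if_pos (by omega)]
      simp only [hF, Finset.coe_sdiff, Set.mem_diff, Finset.coe_product, Set.mem_prod,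
        Finset.mem_coe, Finset.mem_Icc, Finset.mem_Ioc, Finset.coe_singleton,
        Set.mem_singleton_iff, Nat.cast_one, not_and]
      omega
    rw [hset]
    refine ⟨F.finite_toSet, ?_⟩
    rw [Set.ncard_coe_finset, hF]
    rw [Finset.card_sdiff_of_subset (by
      rintro ⟨x, y⟩ h
      simp only [Finset.mem_product, Finset.mem_singleton, Finset.mem_Icc] at h
      simp only [Finset.mem_product, Finset.mem_Icc, Finset.mem_Ioc]
      omega)]
    rw [Finset.card_product, Finset.card_product, Finset.card_singleton,
      Int.card_Icc, Int.card_Icc, Int.card_Ioc]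
    have h1 : ((a:ℤ) - -(c:ℤ)).toNat = a + c := by omega
    have h2 : ((b:ℤ) + 1 - 0).toNat = b + 1 := by omega
    have h3 : ((0:ℤ) + 1 - (1 - (c:ℤ))).toNat = c := by omega
    rw [h1, h2, h3]
    exact Nat.sub_eq_of_eq_add (by ring)
  · -- 1 < c, 1 < d : main case
    have hA : (1:ℤ) ≤ (a:ℤ) := by exact_mod_cast ha
    have hB : (1:ℤ) ≤ (b:ℤ) := by exact_mod_cast hb
    have hk : (1:ℤ) ≤ (c:ℤ) - 1 := by
      have : (2:ℤ) ≤ (c:ℤ) := by exact_mod_cast hc2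
      linarith
    have hl : (1:ℤ) ≤ (d:ℤ) - 1 := by
      have : (2:ℤ) ≤ (d:ℤ) := by exact_mod_cast hd2
      linarith
    set F : Finset (ℤ × ℤ) :=
      ((Finset.Ioc (-(c:ℤ)) (a:ℤ)) ×ˢ (Finset.Ioc (-(d:ℤ)) (b:ℤ))).filter
        (fun v => ((d:ℤ)-1)*(v.1-(a:ℤ)) ≤ ((c:ℤ)-1)*v.2 ∧
          ((c:ℤ)-1)*v.2 < ((d:ℤ)-1)*v.1 + ((c:ℤ)-1)*(b:ℤ)) with hF
    have hset : {v : ℤ × ℤ | memB a b c d v} = (F : Set (ℤ × ℤ)) := by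
      ext ⟨x, y⟩
      show memB a b c d (x, y) ↔ _
      unfold memB
      rw [if_pos ⟨hc2, hd2⟩]
      simp only [hF, Finset.coe_filter, Set.mem_setOf_eq, Finset.mem_product,
        Finset.mem_Ioc]
      tauto
    rw [hset]
    refine ⟨F.finite_toSet, ?_⟩
    rw [Set.ncard_coe_finset, hF]
    have hsplit := Finset.card_filter_add_card_filter_not
      (s := (Finset.Ioc (-(c:ℤ)) (a:ℤ)) ×ˢ (Finset.Ioc (-(d:ℤ)) (b:ℤ)))
      (p := fun v => ((d:ℤ)-1)*(v.1-(a:ℤ)) ≤ ((c:ℤ)-1)*v.2 ∧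
        ((c:ℤ)-1)*v.2 < ((d:ℤ)-1)*v.1 + ((c:ℤ)-1)*(b:ℤ))
    have hboxcard : ((Finset.Ioc (-(c:ℤ)) (a:ℤ)) ×ˢ (Finset.Ioc (-(d:ℤ)) (b:ℤ))).card
        = (a + c) * (b + d) := by
      rw [Finset.card_product, Int.card_Ioc, Int.card_Ioc]
      have h1 : ((a:ℤ) - -(c:ℤ)).toNat = a + c := by omega
      have h2 : ((b:ℤ) - -(d:ℤ)).toNat = b + d := by omega
      rw [h1, h2]
    have hcompl : (((Finset.Ioc (-(c:ℤ)) (a:ℤ)) ×ˢ (Finset.Ioc (-(d:ℤ)) (b:ℤ))).filter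
        (fun v => ¬(((d:ℤ)-1)*(v.1-(a:ℤ)) ≤ ((c:ℤ)-1)*v.2 ∧
          ((c:ℤ)-1)*v.2 < ((d:ℤ)-1)*v.1 + ((c:ℤ)-1)*(b:ℤ)))).card = c * d := by
      have e1 : -(c:ℤ) = -(((c:ℤ)-1)+1) := by ring
      have e2 : -(d:ℤ) = -(((d:ℤ)-1)+1) := by ring
      rw [e1, e2, strip_complement_card (a:ℤ) (b:ℤ) ((c:ℤ)-1) ((d:ℤ)-1) hA hB hk hl]
      rw [Finset.card_product, Int.card_Icc, Int.card_Icc]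
      have h1 : ((c:ℤ) - 1 + 1 - 0).toNat = c := by omega
      have h2 : ((d:ℤ) - 1 + 1 - 0).toNat = d := by omega
      rw [h1, h2]
    rw [hboxcard, hcompl] at hsplit
    rw [show (a + c) * (b + d) = (a * b + a * d + b * c) + c * d from by ring] at hsplit
    exact Nat.add_right_cancel hsplit
end

section
/- Assume gcd(a,b) = gcd(a,c) = gcd(b,d) = 1. Let s, t be positive integers and let n, j be nonnegative integers such that (n−s−t)·c = c·j + s·a and (n−s−t)·d = d·j + t·b. Then there exists a positive integer m with s = b·c·m, t = a·d·m, and n = j + m·(ab + ad + bc); in particular, n ≥ ab + ad + bc. -/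
theorem stmt13 (a b c d : ℕ) (ha : 0 < a) (hb : 0 < b) (hc : 0 < c) (hd : 0 < d)
    (hab : Nat.gcd a b = 1) (hac : Nat.gcd a c = 1) (hbd : Nat.gcd b d = 1)
    (s t n j : ℤ) (hs : 0 < s) (ht : 0 < t) (hn : 0 ≤ n) (hj : 0 ≤ j)
    (h1 : (n - s - t) * (c : ℤ) = (c : ℤ) * j + s * (a : ℤ))
    (h2 : (n - s - t) * (d : ℤ) = (d : ℤ) * j + t * (b : ℤ)) :
    (∃ m : ℤ, 0 < m ∧ s = (b : ℤ) * (c : ℤ) * m ∧ t = (a : ℤ) * (d : ℤ) * m ∧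
      n = j + m * ((a : ℤ) * b + (a : ℤ) * d + (b : ℤ) * c)) ∧
    (a : ℤ) * b + (a : ℤ) * d + (b : ℤ) * c ≤ n := by
  have ha' : (0:ℤ) < a := by exact_mod_cast ha
  have hb' : (0:ℤ) < b := by exact_mod_cast hb
  have hc' : (0:ℤ) < c := by exact_mod_cast hc
  have hd' : (0:ℤ) < d := by exact_mod_cast hd
  set k : ℤ := n - s - t - j with hk
  have hkc : k * c = s * a := by linear_combination h1
  have hkd : k * d = t * b := by linear_combination h2
  have hACop : IsCoprime (a:ℤ) (c:ℤ) := by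
    rw [Int.isCoprime_iff_gcd_eq_one, Int.gcd_natCast_natCast]; exact hac
  have hBACop : IsCoprime (b:ℤ) (a:ℤ) := by
    rw [Int.isCoprime_iff_gcd_eq_one, Int.gcd_natCast_natCast, Nat.gcd_comm]; exact hab
  have hBDCop : IsCoprime (b:ℤ) (d:ℤ) := by
    rw [Int.isCoprime_iff_gcd_eq_one, Int.gcd_natCast_natCast]; exact hbd
  have hak : (a:ℤ) ∣ k := by
    refine hACop.dvd_of_dvd_mul_right ⟨s, ?_⟩
    linear_combination hkc
  obtain ⟨k', hk'⟩ := hak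
  have hsk : s = k' * c := by
    have : (a:ℤ) * (k' * c) = (a:ℤ) * s := by linear_combination hkc - (c:ℤ) * hk'
    linarith [mul_left_cancel₀ (ne_of_gt ha') this]
  have hbk : (b:ℤ) ∣ k' := by
    refine (hBACop.mul_right hBDCop).dvd_of_dvd_mul_right ⟨t, ?_⟩
    have : (a:ℤ) * k' * d = t * b := by rw [← hk']; exact hkd
    linear_combination this
  obtain ⟨m, hm⟩ := hbk
  have hsval : s = (b:ℤ) * c * m := by rw [hsk, hm]; ring
  have hmpos : 0 < m := by
    by_contra h
    push_neg at h
    linarith [mul_nonpos_of_nonneg_of_nonpos (le_of_lt (mul_pos hb' hc')) h]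
  have htval : t = (a:ℤ) * d * m := by
    have : (b:ℤ) * t = (b:ℤ) * ((a:ℤ) * d * m) := by
      have hkd' : (a:ℤ) * ((b:ℤ) * m) * d = t * b := by rw [← hm, ← hk']; exact hkd
      linear_combination -hkd'
    exact mul_left_cancel₀ (ne_of_gt hb') this
  have hnval : n = j + m * ((a:ℤ) * b + (a:ℤ) * d + (b:ℤ) * c) := by
    have hkval : k = (a:ℤ) * ((b:ℤ) * m) := by rw [hk', hm]
    linear_combination -hk + hkval + hsval + htval
  refine ⟨⟨m, hmpos, hsval, htval, hnval⟩, ?_⟩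
  have hX : (0:ℤ) < (a:ℤ) * b + (a:ℤ) * d + (b:ℤ) * c := by positivity
  have h1m : (1:ℤ) ≤ m := hmpos
  have := mul_le_mul_of_nonneg_right h1m hX.le
  linarith
end
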